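/- For every fixed integer d ≥ 3, as M → ∞ the average effective resistance of the d-dimensional toroidal grid converges to R^hydro_d; that is, the sequence M ↦ M^{-d} Σ_{k ∈ {0,...,M-1}^d, k ≠ 0} (2d - 2 Σ_{i=1}^d cos(2π k_i / M))^{-1} tends to ∫_{[0,1]^d} (2d - 2 Σ_{i=1}^d cos(2π x_i))^{-1} dx. -/

import Mathlib

open Real Finset Filter MeasureTheory

/-- Average effective resistance of the `d`-dimensional toroidal grid `T_{M^d}`
(spectral formula). -/
noncomputable def RaveTorus (d M : ℕ) : ℝ :=
  (1 / (M : ℝ) ^ d) *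
    ∑ k ∈ (Fintype.piFinset fun _ : Fin d => Finset.range M).filter (· ≠ 0),
      (2 * d - 2 * ∑ i, Real.cos (2 * π * k i / M))⁻¹

/-!
Write `f x = (2d - 2 ∑ᵢ cos (2π xᵢ))⁻¹`. The average resistance is the Riemann sum
`M⁻ᵈ ∑ₖ f (k / M)` over the grid `{0, …, M-1}ᵈ`, i.e. the integral over the unit cube of the step
function `f (⌊M x⌋ / M)`. These step functions converge to `f` inside the cube, so it suffices to
dominate them by an integrable function. With `m t = min t (1 - t)`, Jordan's inequality gives
`2d - 2 ∑ᵢ cos (2π xᵢ) ≥ 16 ∑ᵢ m(xᵢ)²`. A grid point `t ≠ 0` has `∑ᵢ m(tᵢ)² ≥ M⁻²`, which absorbs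
the error of moving `x` to the corner `t` of its grid cell. Finally, by AM–GM,
`(∑ᵢ m(xᵢ)²)⁻¹ ≤ d⁻¹ ∏ᵢ m(xᵢ)^(-2/d)`, a product of one-variable functions that are integrable
exactly because `2 / d < 1`.
-/

section RiemannSum

variable {ι : Type*}

noncomputable def gridFloor (M : ℕ) (x : ι → ℝ) : ι → ℝ := fun i => ⌊M * x i⌋₊ / M

def gridCell (M : ℕ) (k : ι → ℕ) : Set (ι → ℝ) :=
  Set.univ.pi fun i => Set.Ico (k i / M : ℝ) ((k i + 1) / M)

lemma gridFloor_le {M : ℕ} {x : ι → ℝ} {i : ι} (hx : 0 ≤ x i) : gridFloor M x i ≤ x i :=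
  div_le_of_le_mul₀ M.cast_nonneg hx
    ((Nat.floor_le (mul_nonneg M.cast_nonneg hx)).trans_eq (mul_comm _ _))

lemma lt_gridFloor_add {M : ℕ} (hM : 0 < M) (x : ι → ℝ) (i : ι) :
    x i < gridFloor M x i + (M : ℝ)⁻¹ := by
  have hM' : (0 : ℝ) < M := Nat.cast_pos.2 hM
  rw [gridFloor, div_add' _ _ _ hM'.ne', lt_div_iff₀ hM', mul_comm, inv_mul_cancel₀ hM'.ne']
  exact Nat.lt_floor_add_one _

lemma tendsto_gridFloor {x : ι → ℝ} (hx : ∀ i, 0 ≤ x i) :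
    Tendsto (fun M : ℕ => gridFloor M x) atTop (nhds x) :=
  tendsto_pi_nhds.2 fun i => by
    simpa only [gridFloor, mul_comm _ (x i), Function.comp_def] using
      (tendsto_nat_floor_mul_div_atTop (hx i)).comp tendsto_natCast_atTop_atTop

lemma measurable_gridFloor (M : ℕ) : Measurable (gridFloor (ι := ι) M) := by
  unfold gridFloor
  fun_prop

lemma mem_gridCell_iff {M : ℕ} (hM : 0 < M) {k : ι → ℕ} {x : ι → ℝ} :
    x ∈ gridCell M k ↔ ∀ i, 0 ≤ x i ∧ ⌊M * x i⌋₊ = k i := by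
  have hM' : (0 : ℝ) < M := Nat.cast_pos.2 hM
  simp only [gridCell, Set.mem_univ_pi, Set.mem_Ico, div_le_iff₀' hM', lt_div_iff₀' hM']
  refine forall_congr' fun i => ⟨fun h => ?_, fun ⟨h0, h⟩ => ?_⟩
  · have h0 : 0 ≤ x i := nonneg_of_mul_nonneg_right ((k i).cast_nonneg.trans h.1) hM'
    exact ⟨h0, (Nat.floor_eq_iff (by positivity)).2 h⟩
  · exact (Nat.floor_eq_iff (by positivity)).1 h

lemma gridFloor_eq_of_mem_gridCell {M : ℕ} (hM : 0 < M) {k : ι → ℕ} {x : ι → ℝ}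
    (hx : x ∈ gridCell M k) : gridFloor M x = fun i => (k i : ℝ) / M :=
  funext fun i => by rw [gridFloor, ((mem_gridCell_iff hM).1 hx i).2]

lemma pairwise_disjoint_gridCell {M : ℕ} (hM : 0 < M) (s : Set (ι → ℕ)) :
    s.Pairwise (Function.onFun Disjoint (gridCell M)) := by
  refine fun k _ l _ hkl => Set.disjoint_left.2 fun x hxk hxl => hkl (funext fun i => ?_)
  rw [← ((mem_gridCell_iff hM).1 hxk i).2, ((mem_gridCell_iff hM).1 hxl i).2]

variable [Fintype ι]

lemma measurableSet_gridCell (M : ℕ) (k : ι → ℕ) : MeasurableSet (gridCell M k) :=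
  MeasurableSet.univ_pi fun _ => measurableSet_Ico

lemma measureReal_gridCell (M : ℕ) (k : ι → ℕ) :
    volume.real (gridCell M k) = ((M : ℝ) ^ Fintype.card ι)⁻¹ := by
  rw [gridCell, measureReal_def, Real.volume_pi_Ico_toReal fun i =>
    div_le_div_of_nonneg_right (by linarith) M.cast_nonneg]
  simp [add_div]

lemma setIntegral_gridCell_comp_gridFloor (f : (ι → ℝ) → ℝ) {M : ℕ} (hM : 0 < M) (k : ι → ℕ) :
    ∫ x in gridCell M k, f (gridFloor M x) = ((M : ℝ) ^ Fintype.card ι)⁻¹ * f fun i => k i / M := by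
  rw [setIntegral_congr_fun (measurableSet_gridCell M k)
    fun x hx => congrArg f (gridFloor_eq_of_mem_gridCell hM hx), setIntegral_const,
    measureReal_gridCell, smul_eq_mul]

lemma integrableOn_gridCell_comp_gridFloor (f : (ι → ℝ) → ℝ) {M : ℕ} (hM : 0 < M) (k : ι → ℕ) :
    IntegrableOn (fun x => f (gridFloor M x)) (gridCell M k) :=
  (integrableOn_const (by
      rw [gridCell, Real.volume_pi_Ico]
      exact ENNReal.prod_ne_top fun _ _ => ENNReal.ofReal_ne_top)).congr_fun
    (fun x hx => congrArg f (gridFloor_eq_of_mem_gridCell hM hx).symm) (measurableSet_gridCell M k)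

variable [DecidableEq ι]

noncomputable def cornerRiemannSum (f : (ι → ℝ) → ℝ) (M : ℕ) : ℝ :=
  ((M : ℝ) ^ Fintype.card ι)⁻¹ *
    ∑ k ∈ Fintype.piFinset fun _ : ι => Finset.range M, f fun i => k i / M

lemma biUnion_gridCell {M : ℕ} (hM : 0 < M) :
    ⋃ k ∈ Fintype.piFinset (fun _ : ι => Finset.range M), gridCell M k =
      Set.univ.pi fun _ => Set.Ico 0 1 := by
  have hM' : (0 : ℝ) < M := Nat.cast_pos.2 hM
  have hlt {x : ℝ} (hx : 0 ≤ x) : ⌊M * x⌋₊ < M ↔ x < 1 := by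
    rw [Nat.floor_lt (by positivity), mul_lt_iff_lt_one_right hM']
  ext x
  simp only [Set.mem_iUnion, exists_prop, Fintype.mem_piFinset, Finset.mem_range,
    mem_gridCell_iff hM, Set.mem_univ_pi, Set.mem_Ico]
  constructor
  · rintro ⟨k, hk, hx⟩ i
    exact ⟨(hx i).1, (hlt (hx i).1).1 ((hx i).2 ▸ hk i)⟩
  · intro hx
    exact ⟨fun i => ⌊M * x i⌋₊, fun i => (hlt (hx i).1).2 (hx i).2, fun i => ⟨(hx i).1, rfl⟩⟩

theorem setIntegral_comp_gridFloor_eq_cornerRiemannSum (f : (ι → ℝ) → ℝ) {M : ℕ} (hM : 0 < M) :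
    ∫ x in Set.univ.pi fun _ : ι => Set.Icc (0 : ℝ) 1, f (gridFloor M x) =
      cornerRiemannSum f M := by
  have hIco : (Set.univ.pi fun _ : ι => Set.Ico (0 : ℝ) 1) =ᵐ[volume]
      Set.univ.pi fun _ => Set.Icc 0 1 := by
    rw [Set.pi_univ_Icc]
    exact Measure.univ_pi_Ico_ae_eq_Icc
  rw [← setIntegral_congr_set hIco, ← biUnion_gridCell hM,
    integral_biUnion_finset _ (fun k _ => measurableSet_gridCell M k)
      (pairwise_disjoint_gridCell hM _) fun k _ => integrableOn_gridCell_comp_gridFloor f hM k,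
    cornerRiemannSum, Finset.mul_sum]
  exact Finset.sum_congr rfl fun k _ => setIntegral_gridCell_comp_gridFloor f hM k

theorem tendsto_cornerRiemannSum_of_dominated {f g : (ι → ℝ) → ℝ} (hf : Measurable f)
    (hcont : ∀ x ∈ Set.univ.pi fun _ => Set.Ioo 0 1, ContinuousAt f x)
    (hg : IntegrableOn g (Set.univ.pi fun _ => Set.Icc 0 1))
    (hbound : ∀ M, ∀ x ∈ Set.univ.pi fun _ => Set.Ioo 0 1, ‖f (gridFloor M x)‖ ≤ g x) :
    Tendsto (cornerRiemannSum f) atTop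
      (nhds (∫ x in Set.univ.pi fun _ => Set.Icc 0 1, f x)) := by
  have hIoo : volume.restrict (Set.univ.pi fun _ : ι => Set.Icc (0 : ℝ) 1) =
      volume.restrict (Set.univ.pi fun _ => Set.Ioo 0 1) := by
    refine Measure.restrict_congr_set (EventuallyEq.symm ?_)
    rw [Set.pi_univ_Icc]
    exact Measure.univ_pi_Ioo_ae_eq_Icc
  have hmeas : MeasurableSet (Set.univ.pi fun _ : ι => Set.Ioo (0 : ℝ) 1) :=
    .univ_pi fun _ => measurableSet_Ioo
  have hlim : Tendsto (fun M : ℕ => ∫ x in Set.univ.pi fun _ => Set.Icc 0 1, f (gridFloor M x))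
      atTop (nhds (∫ x in Set.univ.pi fun _ => Set.Icc 0 1, f x)) := by
    rw [IntegrableOn, hIoo] at hg
    rw [hIoo]
    exact tendsto_integral_of_dominated_convergence g
      (fun M => (hf.comp (measurable_gridFloor M)).aestronglyMeasurable) hg
      (fun M => ae_restrict_of_forall_mem hmeas (hbound M))
      (ae_restrict_of_forall_mem hmeas fun x hx => (hcont x hx).tendsto.comp
        (tendsto_gridFloor fun i => (hx i (Set.mem_univ i)).1.le))
  refine hlim.congr' ?_
  filter_upwards [eventually_gt_atTop 0] with M hM using
    setIntegral_comp_gridFloor_eq_cornerRiemannSum f hM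

end RiemannSum

section LaplacianSymbol

def edgeDist (t : ℝ) : ℝ := min t (1 - t)

lemma edgeDist_nonneg {t : ℝ} (ht : t ∈ Set.Icc 0 1) : 0 ≤ edgeDist t :=
  le_min ht.1 (sub_nonneg.2 ht.2)

lemma edgeDist_pos {t : ℝ} (ht : t ∈ Set.Ioo 0 1) : 0 < edgeDist t :=
  lt_min ht.1 (sub_pos.2 ht.2)

lemma edgeDist_le_add_of_le {s t : ℝ} (h : s ≤ t) : edgeDist t ≤ edgeDist s + (t - s) := by
  rw [edgeDist, edgeDist, ← min_add_add_right]
  exact min_le_min (by linarith) (by linarith)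

lemma inv_le_edgeDist_natCast_div {k M : ℕ} (hk : 0 < k) (hkM : k < M) :
    (M : ℝ)⁻¹ ≤ edgeDist (k / M) := by
  have hM : (0 : ℝ) < M := Nat.cast_pos.2 (hk.trans hkM)
  have hk' : (1 : ℝ) ≤ k := Nat.one_le_cast.2 hk
  have hkM' : (k : ℝ) + 1 ≤ M := by exact_mod_cast hkM
  refine le_min ?_ ?_
  · rw [inv_eq_one_div]
    exact div_le_div_of_nonneg_right hk' hM.le
  · rw [le_sub_iff_add_le, inv_eq_one_div, ← add_div, div_le_one hM]
    linarith

lemma two_mul_edgeDist_le_sin {t : ℝ} (ht : t ∈ Set.Icc 0 1) : 2 * edgeDist t ≤ sin (π * t) := by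
  have jordan {s : ℝ} (hs : 0 ≤ s) (hs' : s ≤ 1 / 2) : 2 * s ≤ sin (π * s) := by
    have := mul_le_sin (x := π * s) (by positivity) (by nlinarith [pi_pos])
    rwa [← mul_assoc, div_mul_cancel₀ _ pi_ne_zero] at this
  rcases min_choice t (1 - t) with h | h <;> rw [edgeDist, h]
  · exact jordan ht.1 (by linarith [min_eq_left_iff.1 h])
  · rw [← sin_pi_sub, ← mul_one_sub]
    exact jordan (by linarith [ht.2]) (by linarith [min_eq_right_iff.1 h])

lemma sixteen_mul_edgeDist_sq_le {t : ℝ} (ht : t ∈ Set.Icc 0 1) :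
    16 * edgeDist t ^ 2 ≤ 2 - 2 * cos (2 * π * t) := by
  have h := two_mul_edgeDist_le_sin ht
  have h0 := edgeDist_nonneg ht
  rw [mul_assoc, cos_two_mul_eq_one_sub]
  nlinarith

variable {ι : Type*} [Fintype ι]

noncomputable def laplacianSymbol (x : ι → ℝ) : ℝ := ∑ i, (2 - 2 * cos (2 * π * x i))

lemma laplacianSymbol_eq (x : ι → ℝ) :
    laplacianSymbol x = 2 * Fintype.card ι - 2 * ∑ i, cos (2 * π * x i) := by
  simp [laplacianSymbol, Finset.sum_sub_distrib, Finset.mul_sum, mul_comm]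

lemma laplacianSymbol_nonneg (x : ι → ℝ) : 0 ≤ laplacianSymbol x :=
  Finset.sum_nonneg fun i _ => by linarith [cos_le_one (2 * π * x i)]

lemma continuous_laplacianSymbol : Continuous (laplacianSymbol (ι := ι)) := by
  unfold laplacianSymbol
  fun_prop

lemma sixteen_mul_sum_edgeDist_sq_le_laplacianSymbol {x : ι → ℝ}
    (hx : x ∈ Set.univ.pi fun _ => Set.Icc 0 1) :
    16 * ∑ i, edgeDist (x i) ^ 2 ≤ laplacianSymbol x := by
  rw [Finset.mul_sum]
  exact Finset.sum_le_sum fun i _ => sixteen_mul_edgeDist_sq_le (hx i (Set.mem_univ i))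

lemma sum_edgeDist_sq_pos [Nonempty ι] {x : ι → ℝ} (hx : x ∈ Set.univ.pi fun _ => Set.Ioo 0 1) :
    0 < ∑ i, edgeDist (x i) ^ 2 :=
  Finset.sum_pos (fun i _ => pow_pos (edgeDist_pos (hx i (Set.mem_univ i))) 2) Finset.univ_nonempty

lemma laplacianSymbol_pos [Nonempty ι] {x : ι → ℝ} (hx : x ∈ Set.univ.pi fun _ => Set.Ioo 0 1) :
    0 < laplacianSymbol x := by
  have := sixteen_mul_sum_edgeDist_sq_le_laplacianSymbol (x := x) fun i _ =>
    Set.Ioo_subset_Icc_self (hx i (Set.mem_univ i))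
  linarith [sum_edgeDist_sq_pos hx]

lemma sum_edgeDist_sq_le_of_gridFloor_ne_zero {M : ℕ} {x : ι → ℝ}
    (hx : x ∈ Set.univ.pi fun _ => Set.Ioo 0 1) (ht : gridFloor M x ≠ 0) :
    ∑ i, edgeDist (x i) ^ 2 ≤ (2 * Fintype.card ι + 2) * ∑ i, edgeDist (gridFloor M x i) ^ 2 := by
  have hx0 (i : ι) : 0 ≤ x i := (hx i (Set.mem_univ i)).1.le
  obtain ⟨i₀, hi₀⟩ := Function.ne_iff.1 ht
  have hk : 0 < ⌊M * x i₀⌋₊ := Nat.pos_of_ne_zero fun h => hi₀ (by simp [gridFloor, h])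
  have hM : 0 < M := Nat.pos_of_ne_zero fun h => hi₀ (by simp [gridFloor, h])
  have hkM : ⌊M * x i₀⌋₊ < M := (Nat.floor_lt (by positivity [hx0 i₀])).2
    (mul_lt_of_lt_one_right (Nat.cast_pos.2 hM) (hx i₀ (Set.mem_univ i₀)).2)
  have hlow : (M : ℝ)⁻¹ ^ 2 ≤ ∑ i, edgeDist (gridFloor M x i) ^ 2 :=
    (pow_le_pow_left₀ (by positivity) (inv_le_edgeDist_natCast_div hk hkM) 2).trans
      (Finset.single_le_sum (f := fun i => edgeDist (gridFloor M x i) ^ 2)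
        (fun i _ => sq_nonneg _) (Finset.mem_univ i₀))
  have hcoord (i : ι) :
      edgeDist (x i) ^ 2 ≤ 2 * edgeDist (gridFloor M x i) ^ 2 + 2 * (M : ℝ)⁻¹ ^ 2 := by
    have hshift := edgeDist_le_add_of_le (gridFloor_le (M := M) (hx0 i))
    have hcell := lt_gridFloor_add hM x i
    have hpos := edgeDist_pos (hx i (Set.mem_univ i))
    nlinarith [sq_nonneg (edgeDist (gridFloor M x i) - (M : ℝ)⁻¹)]
  calc ∑ i, edgeDist (x i) ^ 2
      ≤ ∑ i, (2 * edgeDist (gridFloor M x i) ^ 2 + 2 * (M : ℝ)⁻¹ ^ 2) :=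
        Finset.sum_le_sum fun i _ => hcoord i
    _ = 2 * ∑ i, edgeDist (gridFloor M x i) ^ 2 + Fintype.card ι * (2 * (M : ℝ)⁻¹ ^ 2) := by
        rw [Finset.sum_add_distrib, Finset.mul_sum, Finset.sum_const, Finset.card_univ,
          nsmul_eq_mul]
    _ ≤ (2 * Fintype.card ι + 2) * ∑ i, edgeDist (gridFloor M x i) ^ 2 := by
        nlinarith [(Fintype.card ι).cast_nonneg (α := ℝ)]

lemma inv_sum_sq_le_prod_rpow [Nonempty ι] {a : ι → ℝ} (ha : ∀ i, 0 < a i) :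
    (∑ i, a i ^ 2)⁻¹ ≤ (Fintype.card ι : ℝ)⁻¹ * ∏ i, a i ^ (-(2 / Fintype.card ι : ℝ)) := by
  set n : ℝ := (Fintype.card ι : ℝ)
  have hn : 0 < n := Nat.cast_pos.2 Fintype.card_pos
  have hamgm := geom_mean_le_arith_mean_weighted Finset.univ (fun _ => n⁻¹) (fun i => a i ^ 2)
    (fun _ _ => by positivity)
    (by rw [Finset.sum_const, Finset.card_univ, nsmul_eq_mul, mul_inv_cancel₀ hn.ne'])
    (fun i _ => sq_nonneg _)
  have hpow (i : ι) : (a i ^ 2) ^ n⁻¹ = a i ^ (2 / n) := by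
    rw [← rpow_natCast, ← rpow_mul (ha i).le, Nat.cast_ofNat, div_eq_mul_inv]
  simp only [hpow, ← Finset.mul_sum] at hamgm
  have hP : 0 < ∏ i, a i ^ (2 / n) := Finset.prod_pos fun i _ => rpow_pos_of_pos (ha i) _
  calc (∑ i, a i ^ 2)⁻¹ ≤ (n * ∏ i, a i ^ (2 / n))⁻¹ :=
        inv_anti₀ (by positivity) (by rwa [← le_inv_mul_iff₀ hn])
    _ = n⁻¹ * ∏ i, a i ^ (-(2 / n)) := by
        simp only [mul_inv, rpow_neg (ha _).le, Finset.prod_inv_distrib]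

theorem inv_laplacianSymbol_gridFloor_le (M : ℕ) {x : ι → ℝ}
    (hx : x ∈ Set.univ.pi fun _ => Set.Ioo 0 1) :
    (laplacianSymbol (gridFloor M x))⁻¹ ≤
      (Fintype.card ι + 1) / (8 * Fintype.card ι) *
        ∏ i, edgeDist (x i) ^ (-(2 / Fintype.card ι : ℝ)) := by
  set n : ℝ := (Fintype.card ι : ℝ)
  have hpos (i : ι) : 0 < edgeDist (x i) := edgeDist_pos (hx i (Set.mem_univ i))
  by_cases ht : gridFloor M x = 0
  · rw [ht, show laplacianSymbol (0 : ι → ℝ) = 0 by simp [laplacianSymbol], inv_zero]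
    exact mul_nonneg (by positivity) (Finset.prod_nonneg fun i _ => (rpow_pos_of_pos (hpos i) _).le)
  obtain ⟨i₀, -⟩ := Function.ne_iff.1 ht
  have : Nonempty ι := ⟨i₀⟩
  have hn : 0 < n := Nat.cast_pos.2 Fintype.card_pos
  have hSx := sum_edgeDist_sq_pos hx
  have hcmp := sum_edgeDist_sq_le_of_gridFloor_ne_zero hx ht
  have hD := sixteen_mul_sum_edgeDist_sq_le_laplacianSymbol (x := gridFloor M x) fun i _ =>
    ⟨by unfold gridFloor; positivity,
      (gridFloor_le (hx i (Set.mem_univ i)).1.le).trans (hx i (Set.mem_univ i)).2.le⟩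
  calc (laplacianSymbol (gridFloor M x))⁻¹
      ≤ (16 * ((∑ i, edgeDist (x i) ^ 2) / (2 * n + 2)))⁻¹ := by
        refine inv_anti₀ (by positivity) (hD.trans' ?_)
        gcongr
        rwa [div_le_iff₀' (by positivity)]
    _ = (2 * n + 2) / 16 * (∑ i, edgeDist (x i) ^ 2)⁻¹ := by field_simp
    _ ≤ (2 * n + 2) / 16 * (n⁻¹ * ∏ i, edgeDist (x i) ^ (-(2 / n))) := by
        gcongr
        exact inv_sum_sq_le_prod_rpow hpos
    _ = (n + 1) / (8 * n) * ∏ i, edgeDist (x i) ^ (-(2 / n)) := by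
        field_simp
        ring

lemma integrableOn_edgeDist_rpow {p : ℝ} (hp : -1 < p) :
    IntegrableOn (fun t => edgeDist t ^ p) (Set.Icc 0 1) := by
  have hleft : IntegrableOn (fun t : ℝ => t ^ p) (Set.Ioc 0 1) :=
    (intervalIntegral.intervalIntegrable_rpow' hp).1
  have hright : IntegrableOn (fun t : ℝ => (1 - t) ^ p) (Set.Ioc 0 1) := by
    simpa using
      ((intervalIntegral.intervalIntegrable_rpow' (a := 0) (b := 1) hp).comp_sub_left 1).symm.1
  rw [integrableOn_Icc_iff_integrableOn_Ioc]
  refine (hleft.add hright).mono'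
    ((measurable_id.min (measurable_const.sub measurable_id)).pow_const p).aestronglyMeasurable ?_
  filter_upwards [ae_restrict_mem measurableSet_Ioc] with t ht
  rw [norm_of_nonneg (rpow_nonneg (edgeDist_nonneg (Set.Ioc_subset_Icc_self ht)) _)]
  rcases min_choice t (1 - t) with h | h <;> rw [edgeDist, h]
  · exact le_add_of_nonneg_right (rpow_nonneg (sub_nonneg.2 ht.2) _)
  · exact le_add_of_nonneg_left (rpow_nonneg ht.1.le _)

lemma integrableOn_prod_edgeDist_rpow {p : ℝ} (hp : -1 < p) :
    IntegrableOn (fun x : ι → ℝ => ∏ i, edgeDist (x i) ^ p) (Set.univ.pi fun _ => Set.Icc 0 1) := by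
  rw [IntegrableOn, volume_pi, Measure.restrict_pi_pi]
  exact Integrable.fintype_prod fun _ => integrableOn_edgeDist_rpow hp

end LaplacianSymbol

lemma raveTorus_eq_cornerRiemannSum (d M : ℕ) :
    RaveTorus d M = cornerRiemannSum (fun x : Fin d → ℝ => (laplacianSymbol x)⁻¹) M := by
  -- the excluded term `k = 0` is `0⁻¹ = 0`
  rw [RaveTorus, cornerRiemannSum, Fintype.card_fin, one_div, Finset.sum_filter_of_ne]
  · simp only [laplacianSymbol_eq, Fintype.card_fin, mul_div_assoc]
  · rintro k - hk rfl
    simp at hk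

theorem torus_resistance_tendsto_hydro (d : ℕ) (hd : 3 ≤ d) :
    Tendsto (fun M : ℕ => RaveTorus d M) atTop
      (nhds (∫ x in (Set.univ.pi fun _ : Fin d => Set.Icc (0 : ℝ) 1),
        (2 * d - 2 * ∑ i, Real.cos (2 * π * x i))⁻¹)) := by
  have : Nonempty (Fin d) := ⟨⟨0, by omega⟩⟩
  have hp : -1 < -(2 / (Fintype.card (Fin d) : ℝ)) := by
    rw [Fintype.card_fin, neg_lt_neg_iff, div_lt_one (by positivity)]
    exact_mod_cast (by omega : 2 < d)
  have hlim := tendsto_cornerRiemannSum_of_dominated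
    (f := fun x : Fin d → ℝ => (laplacianSymbol x)⁻¹) continuous_laplacianSymbol.measurable.inv
    (fun x hx => continuous_laplacianSymbol.continuousAt.inv₀ (laplacianSymbol_pos hx).ne')
    ((integrableOn_prod_edgeDist_rpow hp).const_mul _)
    fun M x hx => (norm_of_nonneg (inv_nonneg.2 (laplacianSymbol_nonneg _))).trans_le
      (inv_laplacianSymbol_gridFloor_le M hx)
  simp only [raveTorus_eq_cornerRiemannSum]
  simpa only [laplacianSymbol_eq, Fintype.card_fin] using hlim
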